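/- For M > 0, Λ > 0 with 9M²Λ < 1, the coefficient of the principal commutator term, K(r) := 2√(1-9M²Λ)/((1-μ(r))·r·√(1+6M/r)), is strictly positive for all r in the open interval (r_+, r̄_+), and (1-μ(r))·K(r) extends to a continuous strictly positive function on the closed interval [r_+, r̄_+]. -/

import Mathlib

noncomputable def μ (M Λ r : ℝ) : ℝ := 2*M/r + Λ*r^2/3

noncomputable def Kcoef (M Λ r : ℝ) : ℝ :=
  2 * Real.sqrt (1 - 9*M^2*Λ) / ((1 - μ M Λ r) * r * Real.sqrt (1 + 6*M/r))

/-! Clearing the denominator, `r (1 - μ r) = r - 2M - Λr³/3` is a cubic without quadratic term,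
so its roots sum to zero: having the roots `r_+` and `r̄_+`, its third root is `-(r_+ + r̄_+)` and
`r (1 - μ r) = (Λ/3)(r - r_+)(r̄_+ - r)(r + r_+ + r̄_+)`, which is positive between the two roots.
The factor `2√(1 - 9M²Λ) / (r √(1 + 6M/r))` of `K` is manifestly continuous and positive for
`r > 0`. -/

open Set

theorem mul_one_sub_μ (M Λ : ℝ) {r : ℝ} (hr : r ≠ 0) :
    r * (1 - μ M Λ r) = r - 2 * M - Λ * r ^ 3 / 3 := by
  unfold μ
  field_simp
  ring

theorem mul_one_sub_μ_eq_of_roots {M Λ rp rb r : ℝ} (hrp : rp ≠ 0) (hrb : rb ≠ 0)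
    (hrprb : rp ≠ rb) (hroot1 : 1 - μ M Λ rp = 0) (hroot2 : 1 - μ M Λ rb = 0) (hr : r ≠ 0) :
    r * (1 - μ M Λ r) = Λ / 3 * (r - rp) * (rb - r) * (r + rp + rb) := by
  have hcubic1 : rp - 2 * M - Λ * rp ^ 3 / 3 = 0 := by
    rw [← mul_one_sub_μ M Λ hrp, hroot1, mul_zero]
  have hcubic2 : rb - 2 * M - Λ * rb ^ 3 / 3 = 0 := by
    rw [← mul_one_sub_μ M Λ hrb, hroot2, mul_zero]
  have hsum : Λ * (rp ^ 2 + rp * rb + rb ^ 2) = 3 := by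
    have h : (rb - rp) * (Λ * (rp ^ 2 + rp * rb + rb ^ 2) - 3) = 0 := by
      linear_combination 3 * hcubic1 - 3 * hcubic2
    have := (mul_eq_zero.mp h).resolve_left (sub_ne_zero.mpr hrprb.symm)
    linarith
  rw [mul_one_sub_μ M Λ hr]
  linear_combination hcubic1 - (r - rp) / 3 * hsum

theorem one_sub_μ_pos_of_mem_Ioo {M Λ rp rb r : ℝ} (hΛ : 0 < Λ) (hrp : 0 < rp)
    (hrprb : rp < rb) (hroot1 : 1 - μ M Λ rp = 0) (hroot2 : 1 - μ M Λ rb = 0)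
    (hr : r ∈ Ioo rp rb) : 0 < 1 - μ M Λ r := by
  have hr0 : 0 < r := hrp.trans hr.1
  have hfactor := mul_one_sub_μ_eq_of_roots hrp.ne' (hrp.trans hrprb).ne' hrprb.ne
    hroot1 hroot2 hr0.ne'
  have hprod : 0 < r * (1 - μ M Λ r) := by
    rw [hfactor]
    exact mul_pos (mul_pos (mul_pos (by positivity) (sub_pos.mpr hr.1)) (sub_pos.mpr hr.2))
      (by linarith)
  exact pos_of_mul_pos_right hprod hr0.le

/-- `(1 - μ) K`, which stays regular at the horizons where `1 - μ` vanishes. -/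
noncomputable def Kreg (M Λ r : ℝ) : ℝ :=
  2 * Real.sqrt (1 - 9 * M ^ 2 * Λ) / (r * Real.sqrt (1 + 6 * M / r))

theorem sqrt_one_add_pos {M r : ℝ} (hM : 0 ≤ M) (hr : 0 < r) : 0 < Real.sqrt (1 + 6 * M / r) :=
  Real.sqrt_pos.mpr (by positivity)

theorem Kreg_pos {M Λ r : ℝ} (hM : 0 ≤ M) (hsub : 9 * M ^ 2 * Λ < 1) (hr : 0 < r) :
    0 < Kreg M Λ r :=
  div_pos (mul_pos two_pos (Real.sqrt_pos.mpr (by linarith)))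
    (mul_pos hr (sqrt_one_add_pos hM hr))

theorem continuousOn_Kreg {M : ℝ} (Λ : ℝ) (hM : 0 ≤ M) : ContinuousOn (Kreg M Λ) (Ioi 0) := by
  refine continuousOn_const.div ?_ fun r hr => (mul_pos hr (sqrt_one_add_pos hM hr)).ne'
  exact continuousOn_id.mul
    ((continuousOn_const.add (continuousOn_const.div continuousOn_id fun r hr => ne_of_gt hr)).sqrt)

theorem one_sub_μ_mul_Kcoef {M Λ r : ℝ} (hμ : 1 - μ M Λ r ≠ 0) :
    (1 - μ M Λ r) * Kcoef M Λ r = Kreg M Λ r := by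
  rw [Kcoef, Kreg, mul_assoc _ r, ← mul_div_assoc, mul_div_mul_left _ _ hμ]

theorem principal_commutator_coefficient_positive (M Λ rp rb : ℝ)
    (hM : 0 < M) (hΛ : 0 < Λ) (hsub : 9*M^2*Λ < 1) (hrp : 0 < rp)
    (hrprb : rp < rb) (hroot1 : 1 - μ M Λ rp = 0) (hroot2 : 1 - μ M Λ rb = 0) :
    (∀ r ∈ Set.Ioo rp rb, 0 < Kcoef M Λ r) ∧
    ContinuousOn (fun r => 2 * Real.sqrt (1 - 9*M^2*Λ) / (r * Real.sqrt (1 + 6*M/r)))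
      (Set.Icc rp rb) ∧
    (∀ r ∈ Set.Icc rp rb,
      0 < 2 * Real.sqrt (1 - 9*M^2*Λ) / (r * Real.sqrt (1 + 6*M/r))) ∧
    (∀ r ∈ Set.Ioo rp rb,
      (1 - μ M Λ r) * Kcoef M Λ r
        = 2 * Real.sqrt (1 - 9*M^2*Λ) / (r * Real.sqrt (1 + 6*M/r))) := by
  have hμ : ∀ r ∈ Ioo rp rb, 0 < 1 - μ M Λ r := fun r hr =>
    one_sub_μ_pos_of_mem_Ioo hΛ hrp hrprb hroot1 hroot2 hr
  have hIcc : Icc rp rb ⊆ Ioi 0 := fun r hr => hrp.trans_le hr.1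
  refine ⟨fun r hr => ?_, (continuousOn_Kreg Λ hM.le).mono hIcc,
    fun r hr => Kreg_pos hM.le hsub (hIcc hr), fun r hr => one_sub_μ_mul_Kcoef (hμ r hr).ne'⟩
  have hprod : 0 < (1 - μ M Λ r) * Kcoef M Λ r := by
    rw [one_sub_μ_mul_Kcoef (hμ r hr).ne']
    exact Kreg_pos hM.le hsub (hrp.trans hr.1)
  exact pos_of_mul_pos_right hprod (hμ r hr).le
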